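/- Let C ⊆ F_q^n be an F_q-linear code of minimum distance d ≥ 2 with dual of minimum distance d⊥ ≥ 2, and let D_C(t) = ∑_{i=0}^{g+g⊥−2} c_i t^i be Duursma's reduced polynomial of C. Then C(n, d+i)·c_i is an integer for every 0 ≤ i ≤ g + g⊥ − 2. -/
import Mathlib


open MvPolynomial

/-- Homogeneous weight enumerator of a set of words in `Gⁿ`. -/
noncomputable def weightEnum {G : Type*} [AddCommGroup G] [Fintype G] [DecidableEq G]
    (n : ℕ) (C : Set (Fin n → G)) : MvPolynomial (Fin 2) ℚ :=
  ∑ᶠ c ∈ C, X 0 ^ (n - hammingNorm c) * X 1 ^ hammingNorm c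

/-- The MDS weight enumerator `M_{n,d}(x,y)` over a group of order `q`. -/
noncomputable def mdsEnum (q n d : ℕ) : MvPolynomial (Fin 2) ℚ :=
  X 0 ^ n + ∑ s ∈ Finset.Icc d n,
    MvPolynomial.C ((n.choose s : ℚ) * ((q : ℚ) - 1) *
        ∑ i ∈ Finset.range (s - d + 1),
          (-1 : ℚ) ^ i * ((s - 1).choose i : ℚ) * (q : ℚ) ^ (s - d - i)) *
      X 0 ^ (n - s) * X 1 ^ s

noncomputable def mu (a b : ℕ) : Fin 2 →₀ ℕ := Finsupp.single 0 a + Finsupp.single 1 b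

lemma mu_eq {a b a' b' : ℕ} : mu a' b' = mu a b ↔ a' = a ∧ b' = b := by
  constructor
  · intro h
    have h0 := congrArg (fun f : Fin 2 →₀ ℕ => f 0) h
    have h1 := congrArg (fun f : Fin 2 →₀ ℕ => f 1) h
    simp [mu, Finsupp.single_apply] at h0 h1
    exact ⟨h0, h1⟩
  · rintro ⟨rfl, rfl⟩; rfl

lemma coeff_X0X1 (a b a' b' : ℕ) :
    coeff (mu a b) ((X 0 : MvPolynomial (Fin 2) ℚ) ^ a' * X 1 ^ b')
      = if a' = a ∧ b' = b then 1 else 0 := by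
  rw [X_pow_eq_monomial, X_pow_eq_monomial, monomial_mul, mul_one, coeff_monomial,
    show Finsupp.single (0 : Fin 2) a' + Finsupp.single 1 b' = mu a' b' from rfl]
  simp only [mu_eq]

lemma coeff_subpow (a b m t : ℕ) :
    coeff (mu a b) ((X 0 - X 1 : MvPolynomial (Fin 2) ℚ) ^ m * X 1 ^ t)
      = if a ≤ m ∧ m - a + t = b then (-1 : ℚ) ^ (m - a) * (m.choose a : ℚ) else 0 := by
  rw [sub_pow, Finset.sum_mul, coeff_sum]
  have hterm : ∀ j ∈ Finset.range (m+1),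
      coeff (mu a b) (((-1:MvPolynomial (Fin 2) ℚ)^(j+m) * X 0^j * X 1^(m-j)
          * (m.choose j : MvPolynomial (Fin 2) ℚ)) * X 1^t)
        = if j = a then (if m - j + t = b then (-1:ℚ)^(j+m) * m.choose j else 0) else 0 := by
    intro j _
    have h : ((-1:MvPolynomial (Fin 2) ℚ)^(j+m) * X 0^j * X 1^(m-j)
          * (m.choose j : MvPolynomial (Fin 2) ℚ)) * X 1^t
        = C ((-1:ℚ)^(j+m) * m.choose j) * (X 0^j * X 1^(m-j+t)) := by
      rw [map_mul, map_pow, map_neg, map_one, map_natCast, pow_add]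
      ring
    rw [h, coeff_C_mul, coeff_X0X1]
    by_cases h1 : j = a <;> by_cases h2 : m - j + t = b <;> simp [h1, h2]
  rw [Finset.sum_congr rfl hterm, Finset.sum_ite_eq' (Finset.range (m+1))]
  by_cases ha : a ≤ m
  · have hmem : a ∈ Finset.range (m+1) := by simp; omega
    have hsgn : (-1:ℚ)^(a+m) = (-1:ℚ)^(m-a) := by
      rw [show a + m = (m-a) + 2*a by omega, pow_add, pow_mul]
      norm_num
    by_cases h2 : m - a + t = b <;> simp [hmem, h2, ha, hsgn]
  · have hmem : a ∉ Finset.range (m+1) := by simp; omega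
    simp [hmem, ha]


open scoped Classical in
lemma coeff_weightEnum {G : Type*} [AddCommGroup G] [Fintype G] [DecidableEq G]
    (n s : ℕ) (hs : s ≤ n) (C : Set (Fin n → G)) :
    coeff (mu (n-s) s) (weightEnum n C)
      = (((Set.toFinite C).toFinset.filter (fun c => hammingNorm c = s)).card : ℚ) := by
  rw [weightEnum, ← Set.Finite.coe_toFinset (Set.toFinite C), finsum_mem_coe_finset, coeff_sum]
  have hterm : ∀ c ∈ (Set.toFinite C).toFinset,
      coeff (mu (n-s) s) ((X 0 : MvPolynomial (Fin 2) ℚ) ^ (n - hammingNorm c) * X 1 ^ hammingNorm c)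
        = if hammingNorm c = s then (1:ℚ) else 0 := by
    intro c _
    rw [coeff_X0X1]
    congr 1
    simp only [eq_iff_iff]
    constructor
    · exact And.right
    · intro h; exact ⟨by rw [h], h⟩
  rw [Finset.sum_congr rfl hterm, Finset.sum_boole]
  norm_cast
  congr!
  exact (Set.Finite.coe_toFinset _).symm

open scoped Classical in
lemma weight_card_dvd {Fq : Type*} [Field Fq] [Fintype Fq] [DecidableEq Fq]
    (n s : ℕ) (hs : 1 ≤ s) (C : Submodule Fq (Fin n → Fq)) :
    (Fintype.card Fq - 1) ∣
      ((Set.toFinite (C : Set (Fin n → Fq))).toFinset.filter (fun c => hammingNorm c = s)).card := by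
  set S := (Set.toFinite (C : Set (Fin n → Fq))).toFinset.filter (fun c => hammingNorm c = s) with hS
  have hmemS : ∀ c, c ∈ S ↔ c ∈ C ∧ hammingNorm c = s := by
    intro c
    simp only [hS, Finset.mem_filter, Set.Finite.mem_toFinset, SetLike.mem_coe]
  -- scalar action preserves S
  have hsmul_norm : ∀ (u : Fqˣ) (c : Fin n → Fq), hammingNorm ((u:Fq) • c) = hammingNorm c := by
    intro u c
    refine hammingNorm_smul (fun _ => ?_) c
    intro a b h
    exact mul_left_cancel₀ u.ne_zero (by simpa [smul_eq_mul] using h)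
  have hclosed : ∀ (u : Fqˣ) (c : Fin n → Fq), c ∈ S → (u:Fq) • c ∈ S := by
    intro u c hc
    rw [hmemS] at hc ⊢
    exact ⟨C.smul_mem _ hc.1, by rw [hsmul_norm]; exact hc.2⟩
  set orb : (Fin n → Fq) → Finset (Fin n → Fq) :=
    fun c => Finset.image (fun u : Fqˣ => (u:Fq) • c) Finset.univ with horb
  have horb_eq : ∀ (u : Fqˣ) (c : Fin n → Fq), orb ((u:Fq) • c) = orb c := by
    intro u c
    have h1 : (fun u' : Fqˣ => (u':Fq) • ((u:Fq) • c))
        = (fun w : Fqˣ => (w:Fq) • c) ∘ (fun u' : Fqˣ => u' * u) := by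
      funext u'; simp [smul_smul, Function.comp]
    rw [horb]
    simp only [h1, ← Finset.image_image]
    congr 1
    exact Finset.image_univ_of_surjective (fun w => ⟨w * u⁻¹, by simp⟩)
  have hcard : S.card = ∑ O ∈ S.image orb, (S.filter (fun c => orb c = O)).card :=
    Finset.card_eq_sum_card_fiberwise (fun x hx => Finset.mem_image_of_mem orb hx)
  have hfiber : ∀ O ∈ S.image orb, (S.filter (fun c => orb c = O)).card = Fintype.card Fq - 1 := by
    intro O hO
    obtain ⟨c, hc, rfl⟩ := Finset.mem_image.mp hO
    have hcne : c ≠ 0 := by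
      intro h
      have := (hmemS c).mp hc
      rw [h, hammingNorm_zero] at this
      omega
    have hfil : S.filter (fun c' => orb c' = orb c) = orb c := by
      apply Finset.ext
      intro x
      simp only [Finset.mem_filter]
      constructor
      · rintro ⟨hxS, hxorb⟩
        have : x ∈ orb x := Finset.mem_image.mpr ⟨1, Finset.mem_univ _, by simp⟩
        rwa [hxorb] at this
      · intro hx
        obtain ⟨u, _, rfl⟩ := Finset.mem_image.mp hx
        exact ⟨hclosed u c hc, horb_eq u c⟩
    rw [hfil, horb]
    rw [Finset.card_image_of_injective _ ?_, Finset.card_univ, Fintype.card_units]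
    intro u u' huu
    obtain ⟨j, hj⟩ : ∃ j, c j ≠ 0 := Function.ne_iff.mp hcne
    have := congrFun huu j
    simp only [Pi.smul_apply, smul_eq_mul] at this
    exact Units.ext (mul_right_cancel₀ hj this)
  rw [hcard, Finset.sum_congr rfl hfiber, Finset.sum_const, smul_eq_mul]
  exact dvd_mul_left _ _

lemma coeff_mdsEnum (q n dd s : ℕ) (hs1 : 1 ≤ s) (hsn : s ≤ n) :
    ∃ z : ℤ, coeff (mu (n-s) s) (mdsEnum q n dd) = ((q:ℚ) - 1) * z := by
  refine ⟨if dd ≤ s then (n.choose s : ℤ) *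
      ∑ i ∈ Finset.range (s - dd + 1), (-1:ℤ)^i * ((s-1).choose i : ℤ) * (q:ℤ)^(s-dd-i)
    else 0, ?_⟩
  rw [mdsEnum, coeff_add, coeff_sum]
  have h0 : coeff (mu (n-s) s) ((X 0 : MvPolynomial (Fin 2) ℚ)^n) = 0 := by
    have h := coeff_X0X1 (n-s) s n 0
    rw [pow_zero, mul_one] at h
    rw [h, if_neg]
    rintro ⟨-, h2⟩; omega
  have hterm : ∀ s' ∈ Finset.Icc dd n,
      coeff (mu (n-s) s) (C ((n.choose s' : ℚ) * ((q:ℚ)-1) *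
          ∑ i ∈ Finset.range (s'-dd+1), (-1:ℚ)^i * ((s'-1).choose i : ℚ) * (q:ℚ)^(s'-dd-i)) *
          X 0 ^ (n-s') * X 1 ^ s')
        = if s' = s then ((n.choose s' : ℚ) * ((q:ℚ)-1) *
          ∑ i ∈ Finset.range (s'-dd+1), (-1:ℚ)^i * ((s'-1).choose i : ℚ) * (q:ℚ)^(s'-dd-i)) else 0 := by
    intro s' hs'
    rw [mul_assoc, coeff_C_mul, coeff_X0X1]
    rw [Finset.mem_Icc] at hs'
    by_cases h : s' = s
    · subst h; simp
    · rw [if_neg, if_neg h, mul_zero]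
      rintro ⟨-, h2⟩; exact h h2
  rw [Finset.sum_congr rfl hterm, Finset.sum_ite_eq' (Finset.Icc dd n), h0, zero_add]
  by_cases hdd : dd ≤ s
  · rw [if_pos (Finset.mem_Icc.mpr ⟨hdd, hsn⟩), if_pos hdd]
    push_cast
    ring
  · rw [if_neg (fun h => hdd (Finset.mem_Icc.mp h).1), if_neg hdd]
    simp


/-- For an `F_q`-linear `[n,k,d]` code `C` with `d ≥ 2`, dual minimum
distance `d⊥ ≥ 2`, genera `g = n+1-d-k`, `g⊥ = k+1-d⊥`, and Duursma reduced polynomial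
`D_C(t) = ∑_{i=0}^{g+g⊥-2} c_i t^i`, every product `C(n,d+i)·c_i`, `0 ≤ i ≤ g+g⊥-2`,
is an integer. -/
theorem Duursma_coefficients_integral_linear {Fq : Type*} [Field Fq] [Fintype Fq]
    [DecidableEq Fq]
    (n k d d' g g' : ℕ) (hd : 2 ≤ d) (hd' : 2 ≤ d')
    (C : Submodule Fq (Fin n → Fq))
    (hk : Nat.card C = Fintype.card Fq ^ k)
    (hmin : IsLeast {w | ∃ c ∈ C, c ≠ 0 ∧ hammingNorm c = w} d)
    (Cd : Submodule Fq (Fin n → Fq))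
    (hCd : ∀ a : Fin n → Fq, a ∈ Cd ↔ ∀ c ∈ C, ∑ j, a j * c j = 0)
    (hmin' : IsLeast {w | ∃ a ∈ Cd, a ≠ 0 ∧ hammingNorm a = w} d')
    (hg : g = n + 1 - d - k) (hg' : g' = k + 1 - d')
    (D : Polynomial ℚ)
    (hDcoeff : ∀ j, g + g' - 1 ≤ j → D.coeff j = 0)
    (hD : weightEnum n (C : Set (Fin n → Fq))
        = mdsEnum (Fintype.card Fq) n (n + 1 - k) +
            ∑ i ∈ Finset.range (g + g' - 1),
              MvPolynomial.C ((n.choose (d + i) : ℚ) * ((Fintype.card Fq : ℚ) - 1) *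
                  D.coeff i) *
                (X 0 - X 1) ^ (n - d - i) * X 1 ^ (d + i)) :
    ∀ i, i ≤ g + g' - 2 → ∃ z : ℤ, (n.choose (d + i) : ℚ) * D.coeff i = (z : ℚ) := by

  classical
  have hq2 : 2 ≤ Fintype.card Fq := Fintype.one_lt_card
  have hqQ : ((Fintype.card Fq : ℚ) - 1) ≠ 0 := by
    have h2 : (2:ℚ) ≤ (Fintype.card Fq : ℚ) := by exact_mod_cast hq2
    linarith
  intro I
  induction I using Nat.strong_induction_on with
  | _ I IH =>
  intro hI
  by_cases hdn : d + I ≤ n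
  swap
  · exact ⟨0, by rw [Nat.choose_eq_zero_of_lt (by omega)]; simp⟩
  by_cases hIg : g + g' - 1 ≤ I
  · exact ⟨0, by rw [hDcoeff I hIg]; simp⟩
  push_neg at hIg
  set s := d + I with hs
  have hs1 : 1 ≤ s := by omega
  have hsn : s ≤ n := hdn
  have hcoeff := congrArg (coeff (mu (n-s) s)) hD
  rw [coeff_weightEnum n s hsn, coeff_add, coeff_sum] at hcoeff
  have hterm : ∀ i ∈ Finset.range (g+g'-1),
      coeff (mu (n-s) s) (MvPolynomial.C ((n.choose (d+i) : ℚ) * ((Fintype.card Fq : ℚ)-1) * D.coeff i) *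
          (X 0 - X 1)^(n-d-i) * X 1^(d+i))
        = if i ∈ Finset.range (I+1) then
            ((Fintype.card Fq : ℚ)-1) * ((n.choose (d+i) : ℚ) * D.coeff i *
              ((-1:ℚ)^(s-d-i) * (((n-d-i).choose (n-s)) : ℚ))) else 0 := by
    intro i _
    rw [mul_assoc, coeff_C_mul, coeff_subpow]
    by_cases h : i ≤ I
    · rw [if_pos (by constructor <;> omega), if_pos (Finset.mem_range.mpr (by omega)),
        show n - d - i - (n - s) = s - d - i by omega]
      ring
    · rw [if_neg (by rintro ⟨h1, h2⟩; omega), if_neg (by simp; omega), mul_zero]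
  rw [Finset.sum_congr rfl hterm, Finset.sum_ite_mem] at hcoeff
  have hinter : Finset.range (g+g'-1) ∩ Finset.range (I+1) = Finset.range (I+1) := by
    apply Finset.inter_eq_right.mpr
    intro x hx
    simp only [Finset.mem_range] at hx ⊢
    omega
  rw [hinter, Finset.sum_range_succ] at hcoeff
  have hlast : ((Fintype.card Fq : ℚ)-1) * ((n.choose (d+I) : ℚ) * D.coeff I *
      ((-1:ℚ)^(s-d-I) * (((n-d-I).choose (n-s)) : ℚ)))
      = ((Fintype.card Fq : ℚ)-1) * ((n.choose (d+I):ℚ) * D.coeff I) := by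
    have h1 : s - d - I = 0 := by omega
    have h2 : n - d - I = n - s := by omega
    rw [h1, h2, pow_zero, Nat.choose_self]
    push_cast
    ring
  rw [hlast] at hcoeff
  obtain ⟨w, hw⟩ := weight_card_dvd n s hs1 C
  obtain ⟨zM, hzM⟩ := coeff_mdsEnum (Fintype.card Fq) n (n+1-k) s hs1 hsn
  rw [hzM] at hcoeff
  have hwQ : ((((Set.toFinite (C : Set (Fin n → Fq))).toFinset.filter
      (fun c => hammingNorm c = s)).card : ℕ) : ℚ) = ((Fintype.card Fq : ℚ)-1) * (w:ℚ) := by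
    rw [hw]
    push_cast [Nat.cast_sub (by omega : 1 ≤ Fintype.card Fq)]
    ring
  rw [hwQ] at hcoeff
  have hz : ∀ i, i < I → ∃ zi : ℤ, (n.choose (d+i) : ℚ) * D.coeff i = zi :=
    fun i h => IH i h (by omega)
  set Z : ℕ → ℤ := fun i => if h : i < I then (hz i h).choose else 0 with hZdef
  have hZ : ∀ i, i < I → (n.choose (d+i) : ℚ) * D.coeff i = Z i := by
    intro i h
    rw [hZdef]
    simp only [dif_pos h]
    exact (hz i h).choose_spec
  have hsum : ∑ i ∈ Finset.range I, ((Fintype.card Fq : ℚ)-1) * ((n.choose (d+i):ℚ) * D.coeff i *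
        ((-1:ℚ)^(s-d-i) * (((n-d-i).choose (n-s)):ℚ)))
      = ((Fintype.card Fq : ℚ)-1) * ∑ i ∈ Finset.range I,
          (Z i : ℚ) * (-1:ℚ)^(s-d-i) * (((n-d-i).choose (n-s)):ℚ) := by
    rw [Finset.mul_sum]
    refine Finset.sum_congr rfl fun i hi => ?_
    rw [← hZ i (Finset.mem_range.mp hi)]
    ring
  rw [hsum] at hcoeff
  refine ⟨(w:ℤ) - zM - ∑ i ∈ Finset.range I, Z i * (-1)^(s-d-i) * (((n-d-i).choose (n-s)) : ℤ), ?_⟩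
  have hzcast : ((((w:ℤ) - zM - ∑ i ∈ Finset.range I, Z i * (-1)^(s-d-i)
        * (((n-d-i).choose (n-s)) : ℤ)) : ℤ) : ℚ)
      = (w:ℚ) - (zM:ℚ) - ∑ i ∈ Finset.range I,
          (Z i : ℚ) * (-1:ℚ)^(s-d-i) * (((n-d-i).choose (n-s)):ℚ) := by
    push_cast
    ring
  rw [hzcast]
  apply mul_left_cancel₀ hqQ
  linarith [hcoeff]
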